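/- Let λ be a partition, δ ∈ ℤ, and X_λ = {λᵀₗ - l + 1 - δ/2 : l ≥ 1}. Suppose the partition μ is defined by X_μ = (X_λ \ {x_M}) ∪ {-x_M} for some index M with x_M = λᵀ_M - M + 1 - δ/2 and -x_M ∉ X_λ. Then |μ| = |λ| - 2·x_M if x_M > 0, and |μ| = |λ| + 2·|x_M| if x_M < 0. -/

import Mathlib

/-- A partition: a weakly decreasing sequence of naturals (indexed from 0, so
`parts 0 = λ₁`) with finitely many nonzero terms. -/
structure PartitionSeq where
  parts : ℕ → ℕ
  antitone : ∀ ⦃i j : ℕ⦄, i ≤ j → parts j ≤ parts i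
  eventually_zero : ∃ N, ∀ i, N ≤ i → parts i = 0

/-- The `l`-th entry (for `l ≥ 1`) of the transpose (conjugate) partition. -/
noncomputable def PartitionSeq.transp (P : PartitionSeq) (l : ℕ) : ℕ :=
  Nat.card {j : ℕ | l ≤ P.parts j}

/-- The size `|λ| = Σᵢ λᵢ` of a partition. -/
noncomputable def PartitionSeq.size (P : PartitionSeq) : ℕ := ∑ᶠ i, P.parts i

/-- The set `X_λ = {λᵀₗ - l + 1 - δ/2 : l ≥ 1} ⊆ δ/2 + ℤ` (realized inside `ℚ`). -/
def Xset (δ : ℤ) (P : PartitionSeq) : Set ℚ :=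
  {q | ∃ l : ℕ, 1 ≤ l ∧ q = (P.transp l : ℚ) - l + 1 - (δ : ℚ) / 2}


/-
The numbers `x_l = λᵀₗ - l + 1 - δ/2` strictly decrease in `l`, and for `l > λ₁` they run
through the common tail `1 - l - δ/2`, which lies in every `X`. Cutting off that tail at a
level `N ≥ M, λ₁, μ₁` leaves finite sets whose element sums are `|λ|` resp. `|μ|` plus the
same constant `Σ_{l ≤ N} (1 - l - δ/2)`. Reversing `x_M` replaces the summand `x_M` by `-x_M`,
so the sizes differ by exactly `2 x_M`.
-/

open Finset

namespace PartitionSeq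

variable (P : PartitionSeq)

lemma transp_eq_card {N : ℕ} (hN : ∀ i, N ≤ i → P.parts i = 0) {l : ℕ} (hl : 1 ≤ l) :
    P.transp l = #{j ∈ range N | l ≤ P.parts j} := by
  have hset : {j : ℕ | l ≤ P.parts j} = ↑({j ∈ range N | l ≤ P.parts j} : Finset ℕ) := by
    ext j
    simp only [Set.mem_ofPred_eq, coe_filter, mem_range, iff_and_self]
    intro hj
    by_contra! hNj
    have := hN j hNj
    omega
  rw [transp, hset, Nat.card_coe_set_eq, Set.ncard_coe_finset]

lemma transp_eq_zero {l : ℕ} (hl : P.parts 0 < l) : P.transp l = 0 := by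
  have hempty : {j : ℕ | l ≤ P.parts j} = ∅ :=
    Set.eq_empty_of_forall_notMem fun j hj => absurd (P.antitone j.zero_le) (by simp at hj; omega)
  simp [transp, hempty]

lemma transp_le_transp {l l' : ℕ} (hl : 1 ≤ l) (h : l ≤ l') : P.transp l' ≤ P.transp l := by
  obtain ⟨N, hN⟩ := P.eventually_zero
  rw [P.transp_eq_card hN hl, P.transp_eq_card hN (hl.trans h)]
  exact card_le_card (monotone_filter_right _ fun _ _ hj => h.trans hj)

lemma size_eq_sum_range {N : ℕ} (hN : ∀ i, N ≤ i → P.parts i = 0) :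
    P.size = ∑ j ∈ range N, P.parts j := by
  refine finsum_eq_sum_of_support_subset _ fun j hj => ?_
  by_contra! hNj
  exact hj (hN j (by simpa using hNj))

lemma size_eq_sum_transp {K : ℕ} (hK : P.parts 0 ≤ K) :
    P.size = ∑ l ∈ Icc 1 K, P.transp l := by
  obtain ⟨N, hN⟩ := P.eventually_zero
  have hpart : ∀ j, P.parts j = #{l ∈ Icc 1 K | l ≤ P.parts j} := fun j => by
    have hjK : P.parts j ≤ K := (P.antitone j.zero_le).trans hK
    rw [show ({l ∈ Icc 1 K | l ≤ P.parts j} : Finset ℕ) = Icc 1 (P.parts j) by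
      ext l; simp only [mem_filter, mem_Icc]; omega]
    simp
  calc P.size = ∑ j ∈ range N, #{l ∈ Icc 1 K | l ≤ P.parts j} := by
        rw [P.size_eq_sum_range hN]; exact sum_congr rfl fun j _ => hpart j
    _ = ∑ l ∈ Icc 1 K, #{j ∈ range N | l ≤ P.parts j} := by
        simp only [card_filter]; exact sum_comm
    _ = ∑ l ∈ Icc 1 K, P.transp l :=
        sum_congr rfl fun l hl => (P.transp_eq_card hN (mem_Icc.mp hl).1).symm

/-- The element `x_l` of `X_λ`. -/
noncomputable def xcoord (δ : ℤ) (l : ℕ) : ℚ := (P.transp l : ℚ) - l + 1 - (δ : ℚ) / 2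

lemma xcoord_strictAntiOn (δ : ℤ) : StrictAntiOn (P.xcoord δ) (Set.Ici 1) := by
  intro l hl l' _ h
  have htransp : (P.transp l' : ℚ) ≤ P.transp l := by
    exact_mod_cast P.transp_le_transp hl h.le
  have hll' : (l : ℚ) < l' := by exact_mod_cast h
  simp only [xcoord]
  linarith

lemma xcoord_injOn (δ : ℤ) (N : ℕ) : Set.InjOn (P.xcoord δ) ↑(Icc 1 N) :=
  (P.xcoord_strictAntiOn δ).injOn.mono fun _ hl => (mem_Icc.mp hl).1

end PartitionSeq

open PartitionSeq

def Xtail (δ : ℤ) (N : ℕ) : Set ℚ := {q | ∃ l : ℕ, N < l ∧ q = 1 - (l : ℚ) - (δ : ℚ) / 2}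

lemma Xtail_subset_Xset (δ : ℤ) (P : PartitionSeq) {N : ℕ} (hN : P.parts 0 ≤ N) :
    Xtail δ N ⊆ Xset δ P := by
  rintro q ⟨l, hl, rfl⟩
  exact ⟨l, by omega, by rw [P.transp_eq_zero (hN.trans_lt hl)]; push_cast; ring⟩

lemma coe_image_xcoord (δ : ℤ) (P : PartitionSeq) {N : ℕ} (hN : P.parts 0 ≤ N) :
    (↑((Icc 1 N).image (P.xcoord δ)) : Set ℚ) = Xset δ P \ Xtail δ N := by
  ext a
  simp only [coe_image, coe_Icc, Set.mem_image, Set.mem_Icc, Set.mem_sdiff]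
  constructor
  · rintro ⟨l, ⟨hl, hlN⟩, rfl⟩
    refine ⟨⟨l, hl, rfl⟩, ?_⟩
    rintro ⟨l', hl', heq⟩
    have : (0 : ℚ) ≤ P.transp l := Nat.cast_nonneg _
    have : (l : ℚ) < l' := by exact_mod_cast hlN.trans_lt hl'
    simp only [xcoord] at heq
    linarith
  · rintro ⟨⟨l, hl, rfl⟩, hT⟩
    refine ⟨l, ⟨hl, ?_⟩, rfl⟩
    by_contra! hlN
    exact hT ⟨l, hlN, by rw [P.transp_eq_zero (hN.trans_lt hlN)]; push_cast; ring⟩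

lemma sum_image_xcoord (δ : ℤ) (P : PartitionSeq) {N : ℕ} (hN : P.parts 0 ≤ N) :
    ∑ a ∈ (Icc 1 N).image (P.xcoord δ), a
      = P.size + ∑ l ∈ Icc 1 N, (1 - (l : ℚ) - (δ : ℚ) / 2) := by
  rw [sum_image fun a ha b hb h => P.xcoord_injOn δ N ha hb h, P.size_eq_sum_transp hN,
    Nat.cast_sum, ← sum_add_distrib]
  exact sum_congr rfl fun _ _ => by simp only [xcoord]; ring

lemma size_rev (δ : ℤ) (P Q : PartitionSeq) {M : ℕ} (hM : 1 ≤ M)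
    (hnot : -P.xcoord δ M ∉ Xset δ P)
    (hQ : Xset δ Q = (Xset δ P \ {P.xcoord δ M}) ∪ {-P.xcoord δ M}) :
    (Q.size : ℚ) = P.size - 2 * P.xcoord δ M := by
  set x := P.xcoord δ M
  set N := max M (max (P.parts 0) (Q.parts 0))
  have hNP : P.parts 0 ≤ N := le_max_of_le_right (le_max_left _ _)
  have hNQ : Q.parts 0 ≤ N := le_max_of_le_right (le_max_right _ _)
  set FP := (Icc 1 N).image (P.xcoord δ)
  have hxFP : x ∈ FP := mem_image_of_mem _ (mem_Icc.mpr ⟨hM, le_max_left _ _⟩)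
  have hnxFP : -x ∉ FP.erase x := fun h => by
    have := Finset.mem_coe.mpr (mem_of_mem_erase h)
    rw [coe_image_xcoord δ P hNP] at this
    exact hnot this.1
  have hFQ : (Icc 1 N).image (Q.xcoord δ) = insert (-x) (FP.erase x) := by
    apply coe_injective
    rw [coe_insert, coe_erase, coe_image_xcoord δ Q hNQ, coe_image_xcoord δ P hNP, hQ]
    ext a
    simp only [Set.mem_union, Set.mem_sdiff, Set.mem_singleton_iff, Set.mem_insert_iff]
    constructor
    · rintro ⟨⟨haP, hax⟩ | rfl, haT⟩
      exacts [Or.inr ⟨⟨haP, haT⟩, hax⟩, Or.inl rfl]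
    · rintro (rfl | ⟨⟨haP, haT⟩, hax⟩)
      · exact ⟨Or.inr rfl, fun h => hnot (Xtail_subset_Xset δ P hNP h)⟩
      · exact ⟨Or.inl ⟨haP, hax⟩, haT⟩
  have hsum := sum_image_xcoord δ Q hNQ
  rw [hFQ, sum_insert hnxFP, sum_erase_eq_sub hxFP, sum_image_xcoord δ P hNP] at hsum
  linarith

/-- Reversing the orientation at a vertex: if `μ` is the partition with
`X_μ = (X_λ \ {x_M}) ∪ {-x_M}` where `x_M = λᵀ_M - M + 1 - δ/2` and
`-x_M ∉ X_λ`, then `|μ| = |λ| - 2 x_M` if `x_M > 0`, and `|μ| = |λ| + 2|x_M|`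
if `x_M < 0`. -/
theorem rev_size (δ : ℤ) (P Q : PartitionSeq) (M : ℕ) (hM : 1 ≤ M) (x : ℚ)
    (hx : x = (P.transp M : ℚ) - M + 1 - (δ : ℚ) / 2)
    (hnot : -x ∉ Xset δ P)
    (hQ : Xset δ Q = (Xset δ P \ {x}) ∪ {-x}) :
    (0 < x → (Q.size : ℚ) = (P.size : ℚ) - 2 * x) ∧
    (x < 0 → (Q.size : ℚ) = (P.size : ℚ) + 2 * |x|) := by
  have hx' : x = P.xcoord δ M := hx
  subst hx'
  have key := size_rev δ P Q hM hnot hQ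
  exact ⟨fun _ => key, fun hneg => by rw [key, abs_of_neg hneg]; ring⟩
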